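/- arXiv:2211.06612 — 7 statements merged into one kernel-verified Lean document; each statement's English description precedes it below -/
import Mathlib

section
/- Let h̄ : ℝ^I → ℝ^C be L-Lipschitz as a map from (ℝ^I, ‖·‖₁) to (ℝ^C, ‖·‖₁) with L > 0, taking values in the probability simplex. Let r > 0 and let the confidence threshold τ satisfy τ ≥ L·r/4 + 1/2. If x, x' ∈ ℝ^I satisfy ‖x − x'‖₁ < r, and there are indices i and j with h̄(x)_i ≥ τ and h̄(x')_j ≥ τ, then i = j. -/
/-- Let hb : ℝ^I → ℝ^C be L-Lipschitz from (ℝ^I, ‖·‖₁) to (ℝ^C, ‖·‖₁) with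
L > 0, taking values in the probability simplex. Let r > 0 and τ ≥ L·r/4 + 1/2. If
‖x − x'‖₁ < r and hb(x)_i ≥ τ, hb(x')_j ≥ τ, then i = j. -/
theorem stmt_0 {I C : ℕ} (hb : (Fin I → ℝ) → Fin C → ℝ) (L : ℝ) (hL : 0 < L)
    (hLip : ∀ x x' : Fin I → ℝ, ∑ c, |hb x c - hb x' c| ≤ L * ∑ k, |x k - x' k|)
    (hsimplex : ∀ x, (∀ c, 0 ≤ hb x c) ∧ ∑ c, hb x c = 1)
    (r : ℝ) (hr : 0 < r) (τ : ℝ) (hτ : L * r / 4 + 1 / 2 ≤ τ)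
    (x x' : Fin I → ℝ) (hxx' : ∑ k, |x k - x' k| < r)
    (i j : Fin C) (hi : τ ≤ hb x i) (hj : τ ≤ hb x' j) :
    i = j := by
  by_contra hij
  -- pairwise sums bounded by 1
  have pair : ∀ y : Fin I → ℝ, hb y i + hb y j ≤ 1 := by
    intro y
    have h1 := (hsimplex y).2
    have h2 : ∑ c ∈ ({i, j} : Finset (Fin C)), hb y c ≤ ∑ c, hb y c :=
      Finset.sum_le_sum_of_subset_of_nonneg (Finset.subset_univ _)
        (fun c _ _ => (hsimplex y).1 c)
    rw [Finset.sum_pair hij] at h2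
    linarith
  have hxj : hb x j ≤ 1 - τ := by have := pair x; linarith
  have hx'i : hb x' i ≤ 1 - τ := by have := pair x'; linarith
  -- lower bound the L1 distance between hb x and hb x'
  have hsum : |hb x i - hb x' i| + |hb x j - hb x' j| ≤ ∑ c, |hb x c - hb x' c| := by
    have h2 : ∑ c ∈ ({i, j} : Finset (Fin C)), |hb x c - hb x' c|
        ≤ ∑ c, |hb x c - hb x' c| :=
      Finset.sum_le_sum_of_subset_of_nonneg (Finset.subset_univ _)
        (fun c _ _ => abs_nonneg _)
    rwa [Finset.sum_pair hij] at h2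
  have hai : 2 * τ - 1 ≤ |hb x i - hb x' i| := by
    have : 2 * τ - 1 ≤ hb x i - hb x' i := by linarith
    exact this.trans (le_abs_self _)
  have haj : 2 * τ - 1 ≤ |hb x j - hb x' j| := by
    have : 2 * τ - 1 ≤ hb x' j - hb x j := by linarith
    calc 2 * τ - 1 ≤ hb x' j - hb x j := this
      _ ≤ |hb x' j - hb x j| := le_abs_self _
      _ = |hb x j - hb x' j| := abs_sub_comm _ _
  have hlip := hLip x x'
  have hLr : L * ∑ k, |x k - x' k| < L * r := by
    exact (mul_lt_mul_iff_right₀ hL).mpr hxx'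
  nlinarith [hsum, hai, haj, hlip, hLr]
end

section
/- (Claim 1: consistency robustness of the source-like set.) Let h̄ : ℝ^I → ℝ^C be L-Lipschitz as a map from (ℝ^I, ‖·‖₁) to (ℝ^C, ‖·‖₁) with L > 0, taking values in the probability simplex, let r > 0, and let τ ≥ L·r/4 + 1/2 with τ > 1/2 (so that every x in the source-like set D_S = {x : max_c h̄(x)_c ≥ τ} has a unique maximizing index h(x)). Then the set {x ∈ D_S : ∃ x' ∈ B(x) ∩ D_S with h(x') ≠ h(x)} is empty; in particular, for every probability measure μ on ℝ^I, the consistency error of h on D_S with neighbors restricted to D_S is zero: μ{x ∈ D_S : ∃ x' ∈ B(x) ∩ D_S, h(x') ≠ h(x)} = 0. -/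
open MeasureTheory

noncomputable section

/-- The L1 distance on ℝ^I. -/
def d1 {I : ℕ} (x x' : Fin I → ℝ) : ℝ := ∑ k, |x k - x' k|

/-- Claim 1: consistency robustness of the source-like set.
Let hb : ℝ^I → ℝ^C be L-Lipschitz w.r.t. L1 norms (L > 0) taking values in the probability
simplex, r > 0, τ ≥ L·r/4 + 1/2 with τ > 1/2, and let h pick a maximizing index of hb.
Then the set {x ∈ D_S : ∃ x' ∈ B(x) ∩ D_S, h(x') ≠ h(x)} is empty; in particular its measure
is zero under every probability measure. -/
theorem stmt_1 {I C : ℕ} (hb : (Fin I → ℝ) → Fin C → ℝ) (L : ℝ) (hL : 0 < L)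
    (hLip : ∀ x x' : Fin I → ℝ, ∑ c, |hb x c - hb x' c| ≤ L * d1 x x')
    (hsimplex : ∀ x, (∀ c, 0 ≤ hb x c) ∧ ∑ c, hb x c = 1)
    (r : ℝ) (hr : 0 < r) (τ : ℝ) (hτ : L * r / 4 + 1 / 2 ≤ τ) (hτhalf : 1 / 2 < τ)
    (h : (Fin I → ℝ) → Fin C) (hargmax : ∀ x c, hb x c ≤ hb x (h x))
    (DS : Set (Fin I → ℝ)) (hDS : DS = {x | ∃ c, τ ≤ hb x c}) :
    {x | x ∈ DS ∧ ∃ x', x' ∈ DS ∧ d1 x' x < r ∧ h x' ≠ h x} = ∅ ∧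
      ∀ μ : Measure (Fin I → ℝ), IsProbabilityMeasure μ →
        μ {x | x ∈ DS ∧ ∃ x', x' ∈ DS ∧ d1 x' x < r ∧ h x' ≠ h x} = 0 := by

  have key : {x | x ∈ DS ∧ ∃ x', x' ∈ DS ∧ d1 x' x < r ∧ h x' ≠ h x} = ∅ := by
    ext x
    simp only [Set.mem_setOf_eq, Set.mem_empty_iff_false, iff_false, not_and]
    rintro hxDS ⟨x', hx'DS, hdist, hne⟩
    subst hDS
    obtain ⟨c, hc⟩ := hxDS
    obtain ⟨c', hc'⟩ := hx'DS
    have hx1 : τ ≤ hb x (h x) := le_trans hc (hargmax x c)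
    have hx2 : τ ≤ hb x' (h x') := le_trans hc' (hargmax x' c')
    -- pair sums bounded by 1
    have pair_le : ∀ y : Fin I → ℝ, hb y (h x) + hb y (h x') ≤ 1 := by
      intro y
      have hsub : ({h x, h x'} : Finset (Fin C)) ⊆ Finset.univ := Finset.subset_univ _
      have := Finset.sum_le_sum_of_subset_of_nonneg (f := hb y) hsub
        (fun i _ _ => (hsimplex y).1 i)
      rw [Finset.sum_pair (fun hh => hne hh.symm)] at this
      calc hb y (h x) + hb y (h x') ≤ ∑ c, hb y c := this
        _ = 1 := (hsimplex y).2
    have h1 : hb x' (h x) ≤ 1 - τ := by have := pair_le x'; linarith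
    have h2 : hb x (h x') ≤ 1 - τ := by have := pair_le x; linarith
    have term_le : |hb x (h x) - hb x' (h x)| + |hb x (h x') - hb x' (h x')| ≤
        ∑ c, |hb x c - hb x' c| := by
      have hsub : ({h x, h x'} : Finset (Fin C)) ⊆ Finset.univ := Finset.subset_univ _
      have := Finset.sum_le_sum_of_subset_of_nonneg (f := fun c => |hb x c - hb x' c|) hsub
        (fun i _ _ => abs_nonneg _)
      rwa [Finset.sum_pair (fun hh => hne hh.symm)] at this
    have habs1 : 2 * τ - 1 ≤ |hb x (h x) - hb x' (h x)| := by
      rw [abs_of_nonneg (by linarith)]; linarith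
    have habs2 : 2 * τ - 1 ≤ |hb x (h x') - hb x' (h x')| := by
      rw [abs_of_nonpos (by linarith)]; linarith
    have hLd : L * d1 x x' < L * r := by
      have : d1 x x' = d1 x' x := by
        unfold d1; exact Finset.sum_congr rfl (fun k _ => abs_sub_comm _ _)
      rw [this]; exact (mul_lt_mul_iff_right₀ hL).mpr hdist
    have := hLip x x'
    nlinarith
  refine ⟨key, fun μ _ => ?_⟩
  rw [key]
  simp
end
end

section
/- (Lemma A.1: mass of badly-fit classes.) Let D_S be a probability measure on X with measurable ground-truth labeling y : X → {1,…,C}, with D_S{y = i} > 0 for each i, and class-conditionals D_{S_i}. Let h, h_pl : X → {1,…,C} be measurable classifiers and q, γ ∈ (0,1). Define I = {i ∈ {1,…,C} : P_{D_{S_i}}[h ≠ h_pl] − ε_{D_{S_i}}(h_pl) ≤ γ}, and assume that for each i ∈ I one has P_{D_{S_i}}[M1^i] ≤ q. Then Σ_{i∈{1,…,C}\I} D_S{y = i} ≤ (1/γ)(P_{D_S}[h ≠ h_pl] − ε_{D_S}(h_pl) + q). -/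
open MeasureTheory ProbabilityTheory Set

open scoped ProbabilityTheory Classical

/-!
Write `p i` for the mass of class `i` and `d i` for the mass of `{h ≠ h_pl}` minus the mass of
`{h_pl ≠ y}` inside class `i`. Outside `I` the definition of `I` gives `γ * p i ≤ d i`. Inside `I`
every error of `h_pl` on class `i` is either a disagreement with `h` or lies in `M1^i`, so
`d i ≥ -(mass of M1^i) ≥ -q * p i`. Summing over all classes, the classes in `I` cost at most `q`
in total, while `∑ i, d i = P[h ≠ h_pl] - ε(h_pl)`.
-/

theorem mul_sum_filter_notMem_le {ι : Type*} [Fintype ι] (I : Set ι) [DecidablePred (· ∉ I)]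
    {p d : ι → ℝ} {γ q : ℝ} (hq : 0 ≤ q) (hp : ∀ i, 0 ≤ p i) (hp₁ : ∑ i, p i ≤ 1)
    (hout : ∀ i ∉ I, γ * p i ≤ d i) (hin : ∀ i ∈ I, -(q * p i) ≤ d i) :
    γ * ∑ i ∈ Finset.univ.filter (· ∉ I), p i ≤ ∑ i, d i + q := by
  rw [← Finset.sum_filter_add_sum_filter_not Finset.univ (· ∉ I) d]
  have hout_sum : γ * ∑ i ∈ Finset.univ.filter (· ∉ I), p i ≤
      ∑ i ∈ Finset.univ.filter (· ∉ I), d i := by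
    rw [Finset.mul_sum]
    exact Finset.sum_le_sum fun i hi => hout i (Finset.mem_filter.1 hi).2
  have hin_sum : -(q * ∑ i ∈ Finset.univ.filter (fun i => ¬i ∉ I), p i) ≤
      ∑ i ∈ Finset.univ.filter (fun i => ¬i ∉ I), d i := by
    rw [Finset.mul_sum, ← Finset.sum_neg_distrib]
    exact Finset.sum_le_sum fun i hi => hin i (not_not.1 (Finset.mem_filter.1 hi).2)
  have hin_mass : ∑ i ∈ Finset.univ.filter (fun i => ¬i ∉ I), p i ≤ 1 :=
    (Finset.sum_le_sum_of_subset_of_nonneg (Finset.filter_subset _ _)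
      fun i _ _ => hp i).trans hp₁
  linarith [mul_le_mul_of_nonneg_left hin_mass hq]

section Measure

variable {X : Type*} [MeasurableSpace X]

theorem measureReal_mul_cond (μ : Measure X) [IsFiniteMeasure μ] {s : Set X}
    (hs : MeasurableSet s) (t : Set X) : μ.real s * μ[|s].real t = μ.real (s ∩ t) := by
  rw [measureReal_def, measureReal_def, measureReal_def, ← ENNReal.toReal_mul, mul_comm,
    cond_mul_eq_inter hs]

theorem sum_measureReal_fiber_inter {ι : Type*} [Fintype ι] [MeasurableSpace ι]
    [MeasurableSingletonClass ι] (μ : Measure X) [IsFiniteMeasure μ] {f : X → ι}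
    (hf : Measurable f) (A : Set X) : ∑ i, μ.real ({x | f x = i} ∩ A) = μ.real A := by
  have hfiber : ∀ i, μ.real ({x | f x = i} ∩ A) = (μ.restrict A).real (f ⁻¹' {i}) := fun i =>
    (measureReal_restrict_apply (hf (measurableSet_singleton i))).symm
  simp_rw [hfiber]
  rw [sum_measureReal_preimage_singleton _ fun i _ => hf (measurableSet_singleton i),
    Finset.coe_univ, preimage_univ, measureReal_restrict_apply_univ]

theorem measureReal_fiber_inter_error_le {ι : Type*} (μ : Measure X) [IsFiniteMeasure μ]
    (y h h_pl : X → ι) (i : ι) :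
    μ.real ({x | y x = i} ∩ {x | h_pl x ≠ y x}) ≤
      μ.real ({x | y x = i} ∩ {x | h x ≠ h_pl x}) +
        μ.real ({x | y x = i} ∩ {x | h x = h_pl x ∧ h x ≠ i}) := by
  refine (measureReal_mono ?_).trans (measureReal_union_le _ _)
  rintro x ⟨hyx, herr⟩
  by_cases hagree : h x = h_pl x
  · exact Or.inr ⟨hyx, hagree, hagree ▸ hyx ▸ herr⟩
  · exact Or.inl ⟨hyx, hagree⟩

end Measure

theorem stmt_3_general {C : ℕ} {X : Type*} [MeasurableSpace X]
    (DS : Measure X) [IsProbabilityMeasure DS]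
    (y : X → Fin C) (hy : Measurable y)
    (DS_ : Fin C → Measure X) (hDS_ : ∀ i, DS_ i = DS[|{x | y x = i}])
    (h h_pl : X → Fin C)
    (q γ : ℝ) (hq : q ∈ Set.Ioo (0 : ℝ) 1) (hγ : γ ∈ Set.Ioo (0 : ℝ) 1)
    (I : Set (Fin C))
    (hI : I = {i | ((DS_ i) {x | h x ≠ h_pl x}).toReal -
      ((DS_ i) {x | h_pl x ≠ y x}).toReal ≤ γ})
    (hM1 : ∀ i ∈ I, ((DS_ i) {x | h x = h_pl x ∧ h x ≠ i}).toReal ≤ q) :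
    ∑ i ∈ Finset.univ.filter (· ∉ I), (DS {x | y x = i}).toReal ≤
      (1 / γ) * ((DS {x | h x ≠ h_pl x}).toReal -
        (DS {x | h_pl x ≠ y x}).toReal + q) := by
  simp only [← measureReal_def] at hI hM1 ⊢
  have hweight : ∀ i A, DS.real {x | y x = i} * (DS_ i).real A = DS.real ({x | y x = i} ∩ A) :=
    fun i A => hDS_ i ▸ measureReal_mul_cond DS (hy (measurableSet_singleton i)) A
  have hmass : ∑ i, DS.real {x | y x = i} ≤ 1 := by
    simpa using (sum_measureReal_fiber_inter DS hy univ).le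
  have hout : ∀ i ∉ I, γ * DS.real {x | y x = i} ≤
      DS.real ({x | y x = i} ∩ {x | h x ≠ h_pl x}) -
        DS.real ({x | y x = i} ∩ {x | h_pl x ≠ y x}) := by
    intro i hi
    have hgap : γ < _ := not_le.1 (hI ▸ hi)
    rw [← hweight, ← hweight, ← mul_sub, mul_comm γ]
    exact mul_le_mul_of_nonneg_left hgap.le measureReal_nonneg
  have hin : ∀ i ∈ I, -(q * DS.real {x | y x = i}) ≤
      DS.real ({x | y x = i} ∩ {x | h x ≠ h_pl x}) -
        DS.real ({x | y x = i} ∩ {x | h_pl x ≠ y x}) := by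
    intro i hi
    have hM1_mass := mul_le_mul_of_nonneg_left (hM1 i hi)
      (measureReal_nonneg (μ := DS) (s := {x | y x = i}))
    rw [hweight] at hM1_mass
    linarith [measureReal_fiber_inter_error_le DS y h h_pl i]
  have key := mul_sum_filter_notMem_le I hq.1.le (fun i => measureReal_nonneg) hmass hout hin
  rw [Finset.sum_sub_distrib, sum_measureReal_fiber_inter DS hy,
    sum_measureReal_fiber_inter DS hy] at key
  rw [one_div, ← div_eq_inv_mul, le_div_iff₀ hγ.1, mul_comm]
  exact key

/-- Lemma A.1: mass of badly-fit classes.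
Let D_S be a probability measure with measurable ground-truth labeling y, D_S{y=i} > 0 for
each class, and class-conditionals D_{S_i}. With
I = {i : P_{D_{S_i}}[h ≠ h_pl] − ε_{D_{S_i}}(h_pl) ≤ γ}, assuming P_{D_{S_i}}[M1^i] ≤ q for
i ∈ I, we get Σ_{i∉I} D_S{y=i} ≤ (1/γ)(P_{D_S}[h ≠ h_pl] − ε_{D_S}(h_pl) + q). -/
theorem stmt_3 {C : ℕ} {X : Type*} [MeasurableSpace X]
    (DS : Measure X) [IsProbabilityMeasure DS]
    (y : X → Fin C) (hy : Measurable y)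
    (hpos : ∀ i : Fin C, 0 < DS {x | y x = i})
    (DS_ : Fin C → Measure X) (hDS_ : ∀ i, DS_ i = DS[|{x | y x = i}])
    (h h_pl : X → Fin C) (hh : Measurable h) (hhpl : Measurable h_pl)
    (q γ : ℝ) (hq : q ∈ Set.Ioo (0 : ℝ) 1) (hγ : γ ∈ Set.Ioo (0 : ℝ) 1)
    (I : Set (Fin C))
    (hI : I = {i | ((DS_ i) {x | h x ≠ h_pl x}).toReal -
      ((DS_ i) {x | h_pl x ≠ y x}).toReal ≤ γ})
    (hM1 : ∀ i ∈ I, ((DS_ i) {x | h x = h_pl x ∧ h x ≠ i}).toReal ≤ q) :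
    ∑ i ∈ Finset.univ.filter (· ∉ I), (DS {x | y x = i}).toReal ≤
      (1 / γ) * ((DS {x | h x ≠ h_pl x}).toReal -
        (DS {x | h_pl x ≠ y x}).toReal + q) :=
  stmt_3_general DS y hy DS_ hDS_ h h_pl q γ hq hγ I hI hM1
end

section
/- (Lemma A.2: per-class error bound.) Let ν be a probability measure on X concentrated on the event {x : y(x) = i} for a class i, and let h, h_pl : X → {1,…,C} be measurable classifiers. If ν(M1^i) + ν(M2^i) ≤ q for some q > 0, then ε_ν(h) ≤ ν{x : h(x) ≠ h_pl(x)} − ε_ν(h_pl) + 2q. -/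
open MeasureTheory Set

/-!
Under `ν` the error of a classifier is the mass where it does not predict `i`. A point with
`h ≠ i` lies in `M1` unless `h ≠ h_pl`; a point with `h_pl ≠ i` lies in `M1 ∪ M2` unless
`h = i ≠ h_pl`. The two disagreement events `{h ≠ h_pl, h ≠ i}` and `{h ≠ h_pl, h = i}` are
separated by the measurable set `{h = i}`, so their masses add up to `ν{h ≠ h_pl}`, whence
`ε(h) + ε(h_pl) ≤ ν{h ≠ h_pl} + 2ν(M1) + ν(M2)`.
-/

section

variable {X α : Type*} [MeasurableSpace X] {ν : Measure X}

lemma measureReal_setOf_ne_congr_ae {f g g' : X → α} (hg : g =ᵐ[ν] g') :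
    ν.real {x | f x ≠ g x} = ν.real {x | f x ≠ g' x} :=
  measureReal_congr <| hg.mono fun x hx => congrArg (f x ≠ ·) hx

lemma measureReal_le_add_of_subset_union [IsFiniteMeasure ν] {s t u : Set X} (hs : s ⊆ t ∪ u) :
    ν.real s ≤ ν.real t + ν.real u :=
  (measureReal_mono hs).trans (measureReal_union_le t u)

lemma measureReal_ne_add_measureReal_ne_le [IsFiniteMeasure ν] [MeasurableSpace α]
    [MeasurableSingletonClass α] {h h_pl : X → α} (hh : Measurable h) (i : α) :
    ν.real {x | h x ≠ i} + ν.real {x | h_pl x ≠ i} ≤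
      ν.real {x | h x ≠ h_pl x} + 2 * ν.real {x | h x = h_pl x ∧ h x ≠ i} +
        ν.real {x | h x ≠ h_pl x ∧ h x ≠ i ∧ h_pl x ≠ i} := by
  set D := {x | h x ≠ h_pl x}
  set M1 := {x | h x = h_pl x ∧ h x ≠ i}
  set M2 := {x | h x ≠ h_pl x ∧ h x ≠ i ∧ h_pl x ≠ i}
  have hh_ne : ν.real {x | h x ≠ i} ≤ ν.real M1 + ν.real (D \ {x | h x = i}) :=
    measureReal_le_add_of_subset_union fun x hx => by
      by_cases hx' : h x = h_pl x
      exacts [Or.inl ⟨hx', hx⟩, Or.inr ⟨hx', hx⟩]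
  have hhpl_ne : ν.real {x | h_pl x ≠ i} ≤ ν.real M1 + ν.real M2 + ν.real (D ∩ {x | h x = i}) :=
    calc ν.real {x | h_pl x ≠ i} ≤ ν.real (M1 ∪ M2) + ν.real (D ∩ {x | h x = i}) :=
          measureReal_le_add_of_subset_union fun x hx => by
            by_cases hx' : h x = h_pl x
            · exact Or.inl (Or.inl ⟨hx', hx' ▸ hx⟩)
            by_cases hxi : h x = i
            exacts [Or.inr ⟨hx', hxi⟩, Or.inl (Or.inr ⟨hx', hxi, hx⟩)]
      _ ≤ _ := by gcongr; exact measureReal_union_le M1 M2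
  have hD : ν.real (D ∩ {x | h x = i}) + ν.real (D \ {x | h x = i}) = ν.real D :=
    measureReal_inter_add_sdiff (hh (measurableSet_singleton i))
  linarith

end

theorem stmt_4_general {C : ℕ} {X : Type*} [MeasurableSpace X]
    (ν : Measure X) [IsProbabilityMeasure ν]
    (y : X → Fin C) (i : Fin C)
    (hconc : ν {x | y x ≠ i} = 0)
    (h h_pl : X → Fin C) (hh : Measurable h)
    (q : ℝ)
    (hM12 : (ν {x | h x = h_pl x ∧ h x ≠ i}).toReal +
      (ν {x | h x ≠ h_pl x ∧ h x ≠ i ∧ h_pl x ≠ i}).toReal ≤ q) :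
    (ν {x | h x ≠ y x}).toReal ≤
      (ν {x | h x ≠ h_pl x}).toReal - (ν {x | h_pl x ≠ y x}).toReal + 2 * q := by
  have hy : y =ᵐ[ν] fun _ => i := measure_eq_zero_iff_ae_notMem.mp hconc |>.mono fun x hx => by
    simpa using hx
  simp only [← measureReal_def] at hM12 ⊢
  rw [measureReal_setOf_ne_congr_ae hy, measureReal_setOf_ne_congr_ae hy]
  have hsum := measureReal_ne_add_measureReal_ne_le (ν := ν) (h_pl := h_pl) hh i
  have hM2_nonneg := measureReal_nonneg (μ := ν) (s := {x | h x ≠ h_pl x ∧ h x ≠ i ∧ h_pl x ≠ i})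
  linarith

/-- Lemma A.2: per-class error bound.
Let ν be a probability measure concentrated on {y = i}. If ν(M1^i) + ν(M2^i) ≤ q with q > 0,
then ε_ν(h) ≤ ν{h ≠ h_pl} − ε_ν(h_pl) + 2q. -/
theorem stmt_4 {C : ℕ} {X : Type*} [MeasurableSpace X]
    (ν : Measure X) [IsProbabilityMeasure ν]
    (y : X → Fin C) (hy : Measurable y) (i : Fin C)
    (hconc : ν {x | y x ≠ i} = 0)
    (h h_pl : X → Fin C) (hh : Measurable h) (hhpl : Measurable h_pl)
    (q : ℝ) (hq : 0 < q)
    (hM12 : (ν {x | h x = h_pl x ∧ h x ≠ i}).toReal +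
      (ν {x | h x ≠ h_pl x ∧ h x ≠ i ∧ h_pl x ≠ i}).toReal ≤ q) :
    (ν {x | h x ≠ y x}).toReal ≤
      (ν {x | h x ≠ h_pl x}).toReal - (ν {x | h_pl x ≠ y x}).toReal + 2 * q :=
  stmt_4_general ν y i hconc h h_pl hh q hM12
end

section
/- (Neighborhood of consistent mistakes lies in the violation set.) Let h : X → {1,…,C} be a classifier, y : X → {1,…,C} a ground-truth labeling, i a class, r > 0, and let V = {x : ∃ x' ∈ B(x), h(x') ≠ h(x)} be the consistency-violation set. Set M = {x : y(x) = i and h(x) ≠ i}. If x satisfies y(x) = i, x ∉ M (equivalently h(x) = i), and x ∈ N(M \ V), then x ∈ V. In other words, N(M \ V) \ M ⊆ V on the class-i subpopulation. -/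
open Set

noncomputable section

/-- The transformation set B(x): the open L1 ball of radius r around x. -/
def ball1 {I : ℕ} (r : ℝ) (x : Fin I → ℝ) : Set (Fin I → ℝ) := {x' | d1 x' x < r}

/-- The neighborhood N(S). -/
def nbhd {I C : ℕ} (y : (Fin I → ℝ) → Fin C) (r : ℝ) (S : Set (Fin I → ℝ)) :
    Set (Fin I → ℝ) :=
  {x' | ∃ x ∈ S, y x' = y x ∧ (ball1 r x ∩ ball1 r x').Nonempty}

/-- Neighborhood of consistent mistakes lies in the violation set.
With V the consistency-violation set of h and M = {x : y x = i ∧ h x ≠ i}, if y x = i,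
x ∉ M and x ∈ N(M \ V), then x ∈ V. -/
theorem stmt_8 {I C : ℕ} (h y : (Fin I → ℝ) → Fin C) (i : Fin C) (r : ℝ) (hr : 0 < r)
    (V M : Set (Fin I → ℝ))
    (hV : V = {x | ∃ x' ∈ ball1 r x, h x' ≠ h x})
    (hM : M = {x | y x = i ∧ h x ≠ i})
    (x : Fin I → ℝ) (hyx : y x = i) (hxM : x ∉ M)
    (hxN : x ∈ nbhd y r (M \ V)) :
    x ∈ V := by
  obtain ⟨z, ⟨hzM, hzV⟩, hyz, w, hwz, hwx⟩ := hxN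
  rw [hM] at hzM hxM
  have hxi : h x = i := by
    by_contra hc
    exact hxM ⟨hyx, hc⟩
  have hwz' : h w = h z := by
    by_contra hc
    exact hzV (hV ▸ ⟨w, hwz, hc⟩)
  rw [hV]
  exact ⟨w, hwx, by rw [hwz', hxi]; exact hzM.2⟩
end
end

section
/- (Per-class domain-gap bound.) Let y : X → {1,…,C} be a measurable ground-truth labeling and i a class. Let ν_S and ν_O be probability measures on X, both concentrated on {x : y(x) = i}, let p ∈ [0,1], and set ν_T = p·ν_S + (1−p)·ν_O. Let H be a class of measurable classifiers X → {1,…,C}, let h ∈ H, and set λ_i = inf_{h'∈H}(ε_{ν_S}(h') + ε_{ν_O}(h')). Then ε_{ν_T}(h) ≤ ε_{ν_S}(h) + d_{H∆H}(ν_S, ν_O) + λ_i. -/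
open MeasureTheory Set

noncomputable section

/-- The H∆H-divergence d_{H∆H}(μ,ν) = 2 sup_{h,h'∈H} |μ{h ≠ h'} − ν{h ≠ h'}|. -/
def dHdH {X : Type*} [MeasurableSpace X] {C : ℕ}
    (H : Set (X → Fin C)) (μ ν : Measure X) : ℝ :=
  2 * ⨆ p : H × H,
    |(μ {x | p.1.1 x ≠ p.2.1 x}).toReal - (ν {x | p.1.1 x ≠ p.2.1 x}).toReal|

lemma toReal_le_one {X : Type*} [MeasurableSpace X] (μ : Measure X)
    [IsProbabilityMeasure μ] (s : Set X) : (μ s).toReal ≤ 1 := by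
  have := prob_le_one (μ := μ) (s := s)
  have h1 : (μ s).toReal ≤ (1 : ENNReal).toReal :=
    ENNReal.toReal_mono (by simp) this
  simpa using h1

lemma sub_le_measure_union {X : Type*} [MeasurableSpace X] (μ : Measure X)
    [IsProbabilityMeasure μ] (s t u : Set X) (hsub : s ⊆ t ∪ u) :
    (μ s).toReal ≤ (μ t).toReal + (μ u).toReal := by
  have h1 : μ s ≤ μ t + μ u := (measure_mono hsub).trans (measure_union_le t u)
  have h2 : (μ s).toReal ≤ (μ t + μ u).toReal :=
    ENNReal.toReal_mono (by finiteness) h1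
  rwa [ENNReal.toReal_add (by finiteness) (by finiteness)] at h2

/-- Per-class domain-gap bound.
Let ν_S, ν_O be probability measures concentrated on {y = i}, p ∈ [0,1],
ν_T = p·ν_S + (1−p)·ν_O, h ∈ H, λ_i = inf_{h'∈H}(ε_{ν_S}(h') + ε_{ν_O}(h')). Then
ε_{ν_T}(h) ≤ ε_{ν_S}(h) + d_{H∆H}(ν_S, ν_O) + λ_i. -/
theorem stmt_10 {C : ℕ} {X : Type*} [MeasurableSpace X]
    (y : X → Fin C) (hy : Measurable y) (i : Fin C)
    (νS νO : Measure X) [IsProbabilityMeasure νS] [IsProbabilityMeasure νO]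
    (hconcS : νS {x | y x ≠ i} = 0) (hconcO : νO {x | y x ≠ i} = 0)
    (p : ℝ) (hp : p ∈ Set.Icc (0 : ℝ) 1)
    (νT : Measure X) (hνT : νT = ENNReal.ofReal p • νS + ENNReal.ofReal (1 - p) • νO)
    (H : Set (X → Fin C)) (hHmeas : ∀ h' ∈ H, Measurable h')
    (h : X → Fin C) (hhH : h ∈ H) :
    (νT {x | h x ≠ y x}).toReal ≤
      (νS {x | h x ≠ y x}).toReal + dHdH H νS νO +
        ⨅ h' : H, ((νS {x | h'.1 x ≠ y x}).toReal + (νO {x | h'.1 x ≠ y x}).toReal) := by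
  obtain ⟨hp0, hp1⟩ := hp
  set E : (X → Fin C) → Set X := fun g => {x | g x ≠ y x} with hE
  set D : (X → Fin C) → (X → Fin C) → Set X := fun g g' => {x | g x ≠ g' x} with hD
  -- the supremum is bounded above
  have hbdd : BddAbove (Set.range fun q : H × H =>
      |(νS {x | q.1.1 x ≠ q.2.1 x}).toReal - (νO {x | q.1.1 x ≠ q.2.1 x}).toReal|) := by
    refine ⟨1, ?_⟩
    rintro r ⟨q, rfl⟩
    rw [abs_sub_le_iff]
    constructor <;>
      · have a := toReal_le_one νS {x | q.1.1 x ≠ q.2.1 x}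
        have b := toReal_le_one νO {x | q.1.1 x ≠ q.2.1 x}
        have a0 : (0:ℝ) ≤ (νS {x | q.1.1 x ≠ q.2.1 x}).toReal := ENNReal.toReal_nonneg
        have b0 : (0:ℝ) ≤ (νO {x | q.1.1 x ≠ q.2.1 x}).toReal := ENNReal.toReal_nonneg
        linarith
  have hdnn : 0 ≤ dHdH H νS νO := by
    unfold dHdH
    have : (0:ℝ) ≤ ⨆ q : H × H,
        |(νS {x | q.1.1 x ≠ q.2.1 x}).toReal - (νO {x | q.1.1 x ≠ q.2.1 x}).toReal| :=
      le_ciSup_of_le hbdd ⟨⟨h, hhH⟩, ⟨h, hhH⟩⟩ (abs_nonneg _)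
    linarith
  -- νT measure computation
  have hT : (νT (E h)).toReal = p * (νS (E h)).toReal + (1 - p) * (νO (E h)).toReal := by
    rw [hνT]
    simp only [Measure.add_apply, Measure.smul_apply, smul_eq_mul]
    rw [ENNReal.toReal_add (by finiteness) (by finiteness),
      ENNReal.toReal_mul, ENNReal.toReal_mul,
      ENNReal.toReal_ofReal hp0, ENNReal.toReal_ofReal (by linarith)]
  -- key bound for each h' ∈ H
  have key : ∀ h' ∈ H, (νT (E h)).toReal ≤
      (νS (E h)).toReal + dHdH H νS νO + ((νS (E h')).toReal + (νO (E h')).toReal) := by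
    intro h' hh'
    -- ν_O(E h) ≤ ν_O(D h h') + ν_O(E h')
    have step1 : (νO (E h)).toReal ≤ (νO (D h h')).toReal + (νO (E h')).toReal := by
      apply sub_le_measure_union
      intro x hx
      by_cases hxx : h x = h' x
      · right; simp only [hE, Set.mem_setOf_eq] at hx ⊢; rwa [← hxx]
      · left; exact hxx
    -- ν_O(D h h') ≤ ν_S(D h h') + d/2
    have step2 : (νO (D h h')).toReal ≤ (νS (D h h')).toReal + dHdH H νS νO / 2 := by
      have hle : |(νS (D h h')).toReal - (νO (D h h')).toReal| ≤ dHdH H νS νO / 2 := by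
        have hs := le_ciSup hbdd (⟨⟨h, hhH⟩, ⟨h', hh'⟩⟩ : H × H)
        unfold dHdH
        simp only [hD] at hs ⊢
        linarith
      rw [abs_sub_le_iff] at hle
      linarith [hle.2]
    -- ν_S(D h h') ≤ ν_S(E h) + ν_S(E h')
    have step3 : (νS (D h h')).toReal ≤ (νS (E h)).toReal + (νS (E h')).toReal := by
      apply sub_le_measure_union
      intro x hx
      by_cases hxx : h x = y x
      · right; simp only [hD, Set.mem_setOf_eq] at hx
        simp only [hE, Set.mem_setOf_eq]
        intro hc; exact hx (hxx.trans hc.symm)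
      · left; exact hxx
    have nnS : (0:ℝ) ≤ (νS (E h)).toReal := ENNReal.toReal_nonneg
    have nnS' : (0:ℝ) ≤ (νS (E h')).toReal := ENNReal.toReal_nonneg
    have nnO' : (0:ℝ) ≤ (νO (E h')).toReal := ENNReal.toReal_nonneg
    have nnO : (0:ℝ) ≤ (νO (E h)).toReal := ENNReal.toReal_nonneg
    have hO : (νO (E h)).toReal ≤
        (νS (E h)).toReal + (νS (E h')).toReal + (νO (E h')).toReal + dHdH H νS νO / 2 := by
      linarith
    rw [hT]
    nlinarith [mul_nonneg (sub_nonneg.2 hp1)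
      (add_nonneg (add_nonneg nnS' nnO') (by linarith : (0:ℝ) ≤ dHdH H νS νO / 2))]
  -- conclude via the infimum
  have hinf : (νT (E h)).toReal - ((νS (E h)).toReal + dHdH H νS νO) ≤
      ⨅ h' : H, ((νS (E h'.1)).toReal + (νO (E h'.1)).toReal) := by
    haveI : Nonempty H := ⟨⟨h, hhH⟩⟩
    apply le_ciInf
    intro h'
    have := key h'.1 h'.2
    linarith
  linarith
end
end

section
/- (Error bound on the source-like distribution.) Let D_S be a probability measure on X with measurable ground-truth labeling y : X → {1,…,C}, with D_S{y = i} > 0 for each i, and class-conditionals D_{S_i}; let D_T be another probability measure on X. Let h, h_pl : X → {1,…,C} be measurable classifiers and q, γ ∈ (0,1). Define I = {i : P_{D_{S_i}}[h ≠ h_pl] − ε_{D_{S_i}}(h_pl) ≤ γ}. Assume that for each i ∈ I one has P_{D_{S_i}}[M1^i] + P_{D_{S_i}}[M2^i] ≤ q, and that P_{D_S}[h ≠ h_pl] ≤ P_{D_T}[h ≠ h_pl]. Then ε_{D_S}(h) ≤ ((1+γ)/γ)·(P_{D_T}[h ≠ h_pl] − ε_{D_S}(h_pl) + q) + q. -/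
/-!
Condition on the true class `i`, where the labels are a.s. equal to `i`. Writing `a, b` for the
class-conditional disagreement and pseudo-label error, `h` errs on `M1 ∪ M2 ∪ M3` and
`b = a + P[M1] - P[M3]`, so the error is at most `a - b + 2 (P[M1] + P[M2])` while
`a - b ≥ -P[M1]`. Hence in a class of `I` the error is at most
`((1 + γ) / γ) (a - b) + (1 / γ + 2) q`; outside `I` one has `a - b > γ`, so the error, being at
most `1`, is at most `(a - b) / γ` and obeys the same bound. Averaging over the classes (law of
total probability) and passing from `D_S` to `D_T` in the disagreement term gives the theorem.
-/

open MeasureTheory ProbabilityTheory Set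

section ClassConditional

variable {X κ : Type*} [MeasurableSpace X] (ν : Measure X) {h h_pl : X → κ} (i : κ)

theorem measureReal_pl_ne_le [IsFiniteMeasure ν] :
    ν.real {x | h_pl x ≠ i} ≤
      ν.real {x | h x ≠ h_pl x} + ν.real {x | h x = h_pl x ∧ h x ≠ i} := by
  refine (measureReal_mono fun x hx => ?_).trans (measureReal_union_le _ _)
  by_cases hx' : h x = h_pl x
  · exact Or.inr ⟨hx', hx' ▸ hx⟩
  · exact Or.inl hx'

theorem measureReal_ne_add_measureReal_pl_ne_le [MeasurableSpace κ] [MeasurableSingletonClass κ]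
    [IsFiniteMeasure ν] (hh_pl : Measurable h_pl) :
    ν.real {x | h x ≠ i} + ν.real {x | h_pl x ≠ i} ≤
      ν.real {x | h x ≠ h_pl x} + 2 * ν.real {x | h x = h_pl x ∧ h x ≠ i} +
        ν.real {x | h x ≠ h_pl x ∧ h x ≠ i ∧ h_pl x ≠ i} := by
  set M1 := {x | h x = h_pl x ∧ h x ≠ i}
  set M2 := {x | h x ≠ h_pl x ∧ h x ≠ i ∧ h_pl x ≠ i}
  set M3 := {x | h x ≠ h_pl x ∧ h x ≠ i ∧ h_pl x = i}
  have hsub : {x | h x ≠ i} ⊆ M1 ∪ M2 ∪ M3 := fun x hx => by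
    by_cases hx' : h x = h_pl x
    · exact Or.inl (Or.inl ⟨hx', hx⟩)
    by_cases hpl : h_pl x = i
    · exact Or.inr ⟨hx', hx, hpl⟩
    · exact Or.inl (Or.inr ⟨hx', hx, hpl⟩)
  have hcover : ν.real {x | h x ≠ i} ≤ ν.real M1 + ν.real M2 + ν.real M3 :=
    calc ν.real {x | h x ≠ i} ≤ ν.real (M1 ∪ M2 ∪ M3) := measureReal_mono hsub
      _ ≤ ν.real (M1 ∪ M2) + ν.real M3 := measureReal_union_le _ _
      _ ≤ ν.real M1 + ν.real M2 + ν.real M3 := by gcongr; exact measureReal_union_le _ _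
  have hdisj : Disjoint M3 {x | h_pl x ≠ i} :=
    disjoint_left.2 fun x hx hx' => hx' hx.2.2
  have hpl_meas : MeasurableSet {x | h_pl x ≠ i} :=
    (hh_pl (measurableSet_singleton i)).compl
  have hsplit : ν.real M3 + ν.real {x | h_pl x ≠ i} ≤ ν.real {x | h x ≠ h_pl x} + ν.real M1 := by
    rw [← measureReal_union hdisj hpl_meas]
    refine (measureReal_mono fun x hx => ?_).trans (measureReal_union_le _ _)
    rcases hx with hx | hx
    · exact Or.inl hx.1
    by_cases hx' : h x = h_pl x
    · exact Or.inr ⟨hx', hx' ▸ hx⟩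
    · exact Or.inl hx'
  linarith

theorem measureReal_ne_label_le [MeasurableSpace κ] [MeasurableSingletonClass κ]
    [IsZeroOrProbabilityMeasure ν] {y : X → κ} (hy : ∀ᵐ x ∂ν, y x = i) (hh_pl : Measurable h_pl)
    {q γ : ℝ} (hq : 0 ≤ q) (hγ : 0 < γ)
    (hclass : ν.real {x | h x ≠ h_pl x} - ν.real {x | h_pl x ≠ y x} ≤ γ →
      ν.real {x | h x = h_pl x ∧ h x ≠ i} +
        ν.real {x | h x ≠ h_pl x ∧ h x ≠ i ∧ h_pl x ≠ i} ≤ q) :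
    ν.real {x | h x ≠ y x} ≤
      (1 + γ) / γ * (ν.real {x | h x ≠ h_pl x} - ν.real {x | h_pl x ≠ y x}) + (1 / γ + 2) * q := by
  have hlabel : ∀ f : X → κ, ν.real {x | f x ≠ y x} = ν.real {x | f x ≠ i} := fun f =>
    measureReal_congr <| by
      filter_upwards [hy] with x hx
      change (f x ≠ y x) = (f x ≠ i)
      rw [hx]
  simp only [hlabel] at hclass ⊢
  set d := ν.real {x | h x ≠ h_pl x} - ν.real {x | h_pl x ≠ i}
  have hexpand : (1 + γ) / γ * d + (1 / γ + 2) * q = d + 2 * q + d / γ + q / γ := by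
    field_simp; ring
  have hqγ : 0 ≤ q / γ := div_nonneg hq hγ.le
  rw [hexpand]
  by_cases hd : d ≤ γ
  · have hM := hclass hd
    have hsum := measureReal_ne_add_measureReal_pl_ne_le ν i hh_pl (h := h)
    have hpl := measureReal_pl_ne_le ν i (h := h) (h_pl := h_pl)
    have hM2 : 0 ≤ ν.real {x | h x ≠ h_pl x ∧ h x ≠ i ∧ h_pl x ≠ i} := measureReal_nonneg
    have hdq : 0 ≤ (d + q) / γ := div_nonneg (by linarith) hγ.le
    rw [add_div] at hdq
    linarith
  · have hd : 1 < d / γ := (one_lt_div hγ).2 (not_le.1 hd)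
    have herr : ν.real {x | h x ≠ i} ≤ 1 := measureReal_le_one
    linarith

end ClassConditional

section TotalProbability

variable {Ω κ : Type*} [MeasurableSpace Ω] [Fintype κ] [MeasurableSpace κ]
  [DiscreteMeasurableSpace κ] {Y : Ω → κ}

theorem measureReal_eq_sum_mul_cond (hY : Measurable Y) (μ : Measure Ω) [IsFiniteMeasure μ]
    (s : Set Ω) : μ.real s = ∑ i, μ.real (Y ⁻¹' {i}) * (μ[|Y ⁻¹' {i}]).real s := by
  conv_lhs => rw [← sum_meas_smul_cond_fiber hY μ]
  simp only [Measure.real, Measure.coe_finsetSum, Finset.sum_apply, Measure.smul_apply,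
    smul_eq_mul]
  rw [ENNReal.toReal_sum fun i _ => ENNReal.mul_ne_top (measure_ne_top μ _)
    (measure_ne_top μ[|Y ⁻¹' {i}] s)]
  simp only [ENNReal.toReal_mul]

theorem measureReal_le_of_forall_cond_le (hY : Measurable Y) (μ : Measure Ω)
    [IsProbabilityMeasure μ] {s t u : Set Ω} {c d : ℝ}
    (hle : ∀ i, (μ[|Y ⁻¹' {i}]).real s ≤
      c * ((μ[|Y ⁻¹' {i}]).real t - (μ[|Y ⁻¹' {i}]).real u) + d) :
    μ.real s ≤ c * (μ.real t - μ.real u) + d := by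
  have hw : ∑ i, μ.real (Y ⁻¹' {i}) = 1 := by
    rw [sum_measureReal_preimage_singleton _ fun i _ => hY (measurableSet_singleton i)]
    simp
  calc μ.real s = ∑ i, μ.real (Y ⁻¹' {i}) * (μ[|Y ⁻¹' {i}]).real s :=
        measureReal_eq_sum_mul_cond hY μ s
    _ ≤ ∑ i, μ.real (Y ⁻¹' {i}) *
          (c * ((μ[|Y ⁻¹' {i}]).real t - (μ[|Y ⁻¹' {i}]).real u) + d) :=
        Finset.sum_le_sum fun i _ => mul_le_mul_of_nonneg_left (hle i) measureReal_nonneg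
    _ = c * (μ.real t - μ.real u) + d := by
        rw [measureReal_eq_sum_mul_cond hY μ t, measureReal_eq_sum_mul_cond hY μ u,
          ← Finset.sum_sub_distrib, Finset.mul_sum]
        simp only [mul_add, Finset.sum_add_distrib, ← Finset.sum_mul, hw, one_mul]
        exact congrArg (· + d) (Finset.sum_congr rfl fun i _ => by ring)

end TotalProbability

theorem stmt_11_general {C : ℕ} {X : Type*} [MeasurableSpace X]
    (DS : Measure X) [IsProbabilityMeasure DS]
    (DT : Measure X) [IsProbabilityMeasure DT]
    (y : X → Fin C) (hy : Measurable y)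
    (DS_ : Fin C → Measure X) (hDS_ : ∀ i, DS_ i = DS[|{x | y x = i}])
    (h h_pl : X → Fin C) (hhpl : Measurable h_pl)
    (q γ : ℝ) (hq : q ∈ Set.Ioo (0 : ℝ) 1) (hγ : γ ∈ Set.Ioo (0 : ℝ) 1)
    (I : Set (Fin C))
    (hI : I = {i | ((DS_ i) {x | h x ≠ h_pl x}).toReal -
      ((DS_ i) {x | h_pl x ≠ y x}).toReal ≤ γ})
    (hM12 : ∀ i ∈ I, ((DS_ i) {x | h x = h_pl x ∧ h x ≠ i}).toReal +
      ((DS_ i) {x | h x ≠ h_pl x ∧ h x ≠ i ∧ h_pl x ≠ i}).toReal ≤ q)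
    (hST : (DS {x | h x ≠ h_pl x}).toReal ≤ (DT {x | h x ≠ h_pl x}).toReal) :
    (DS {x | h x ≠ y x}).toReal ≤
      ((1 + γ) / γ) * ((DT {x | h x ≠ h_pl x}).toReal -
        (DS {x | h_pl x ≠ y x}).toReal + q) + q := by
  obtain ⟨hq0, -⟩ := hq
  obtain ⟨hγ0, -⟩ := hγ
  have hDS : DS_ = fun i => DS[|y ⁻¹' {i}] := funext hDS_
  subst hDS hI
  simp only [← measureReal_def] at hM12 hST ⊢
  have hclass : ∀ i, (DS[|y ⁻¹' {i}]).real {x | h x ≠ y x} ≤ (1 + γ) / γ *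
      ((DS[|y ⁻¹' {i}]).real {x | h x ≠ h_pl x} - (DS[|y ⁻¹' {i}]).real {x | h_pl x ≠ y x}) +
        (1 / γ + 2) * q := fun i =>
    measureReal_ne_label_le DS[|y ⁻¹' {i}] i (ae_cond_mem (hy (measurableSet_singleton i))) hhpl
      hq0.le hγ0 (hM12 i)
  calc DS.real {x | h x ≠ y x} ≤ (1 + γ) / γ *
        (DS.real {x | h x ≠ h_pl x} - DS.real {x | h_pl x ≠ y x}) + (1 / γ + 2) * q :=
        measureReal_le_of_forall_cond_le hy DS hclass
    _ ≤ (1 + γ) / γ * (DT.real {x | h x ≠ h_pl x} - DS.real {x | h_pl x ≠ y x}) +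
        (1 / γ + 2) * q := by gcongr
    _ = (1 + γ) / γ * (DT.real {x | h x ≠ h_pl x} - DS.real {x | h_pl x ≠ y x} + q) + q := by
        field_simp; ring

/-- Error bound on the source-like distribution.
With I = {i : P_{D_{S_i}}[h ≠ h_pl] − ε_{D_{S_i}}(h_pl) ≤ γ}, assuming
P_{D_{S_i}}[M1^i] + P_{D_{S_i}}[M2^i] ≤ q for i ∈ I and
P_{D_S}[h ≠ h_pl] ≤ P_{D_T}[h ≠ h_pl], we get
ε_{D_S}(h) ≤ ((1+γ)/γ)·(P_{D_T}[h ≠ h_pl] − ε_{D_S}(h_pl) + q) + q. -/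
theorem stmt_11 {C : ℕ} {X : Type*} [MeasurableSpace X]
    (DS : Measure X) [IsProbabilityMeasure DS]
    (DT : Measure X) [IsProbabilityMeasure DT]
    (y : X → Fin C) (hy : Measurable y)
    (hpos : ∀ i : Fin C, 0 < DS {x | y x = i})
    (DS_ : Fin C → Measure X) (hDS_ : ∀ i, DS_ i = DS[|{x | y x = i}])
    (h h_pl : X → Fin C) (hh : Measurable h) (hhpl : Measurable h_pl)
    (q γ : ℝ) (hq : q ∈ Set.Ioo (0 : ℝ) 1) (hγ : γ ∈ Set.Ioo (0 : ℝ) 1)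
    (I : Set (Fin C))
    (hI : I = {i | ((DS_ i) {x | h x ≠ h_pl x}).toReal -
      ((DS_ i) {x | h_pl x ≠ y x}).toReal ≤ γ})
    (hM12 : ∀ i ∈ I, ((DS_ i) {x | h x = h_pl x ∧ h x ≠ i}).toReal +
      ((DS_ i) {x | h x ≠ h_pl x ∧ h x ≠ i ∧ h_pl x ≠ i}).toReal ≤ q)
    (hST : (DS {x | h x ≠ h_pl x}).toReal ≤ (DT {x | h x ≠ h_pl x}).toReal) :
    (DS {x | h x ≠ y x}).toReal ≤
      ((1 + γ) / γ) * ((DT {x | h x ≠ h_pl x}).toReal -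
        (DS {x | h_pl x ≠ y x}).toReal + q) + q :=
  stmt_11_general DS DT y hy DS_ hDS_ h h_pl hhpl q γ hq hγ I hI hM12 hST
end
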